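/- arXiv:1503.00563 — 5 statements merged into one kernel-verified Lean document; each statement's English description precedes it below -/
import Mathlib

section
/- Let X be a compact Hausdorff space, A ⊆ X a nonempty proper closed subset, and a ∈ [0,1]. Define ν₁ on closed sets C by: ν₁(C) = 0 if A \ C ≠ ∅; ν₁(C) = a if A ⊆ C and C ≠ X; ν₁(X) = 1. Then ν₁ is a capacity (normalized, monotone, upper-semicontinuous), and for any capacity α on X, ν₁ ≤ α (pointwise on closed sets) if and only if α(A) ≥ a. -/
open Classical

/-- An upper-semicontinuous capacity on a compact Hausdorff space `X`:
a monotone, normalized, `[0,1]`-valued set function on closed subsets,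
extended to arbitrary subsets by inner regularity. -/
structure Capacity (X : Type*) [TopologicalSpace X] where
  toFun : Set X → ℝ
  nonneg : ∀ S : Set X, 0 ≤ toFun S
  le_one : ∀ S : Set X, toFun S ≤ 1
  empty : toFun ∅ = 0
  univ : toFun Set.univ = 1
  mono : ∀ ⦃F G : Set X⦄, IsClosed F → IsClosed G → F ⊆ G → toFun F ≤ toFun G
  innerReg : ∀ S : Set X, toFun S = sSup (toFun '' {K : Set X | IsClosed K ∧ K ⊆ S})
  usc : ∀ ⦃F : Set X⦄ ⦃a : ℝ⦄, IsClosed F → toFun F < a →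
    ∃ O : Set X, IsOpen O ∧ F ⊆ O ∧ ∀ ⦃B : Set X⦄, IsClosed B → B ⊆ O → toFun B < a

/-!
`ν₁` is monotone with values in `{0, a, 1}`, and its value on any set is already attained on a
closed subset (`X`, `A` or `∅`), which gives inner regularity. For upper semicontinuity at a
closed `F ≠ X`, delete one point `x ∉ F`, taken in `A` when `A ⊄ F`: on closed subsets of the
open set `X \ {x}` the function `ν₁` is at most `ν₁(F)`.
-/

open Set

section NuOne

variable {X : Type*}

noncomputable def nuOne (A : Set X) (a : ℝ) (S : Set X) : ℝ :=
  if S = univ then 1 else if A ⊆ S then a else 0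

variable {A : Set X} {a : ℝ}

@[simp]
lemma nuOne_univ : nuOne A a univ = 1 := if_pos rfl

lemma nuOne_of_subset_of_ne_univ {S : Set X} (hAS : A ⊆ S) (hS : S ≠ univ) :
    nuOne A a S = a := by
  rw [nuOne, if_neg hS, if_pos hAS]

lemma nuOne_of_not_subset {S : Set X} (hAS : ¬A ⊆ S) : nuOne A a S = 0 := by
  rw [nuOne, if_neg (fun (hS : S = univ) => hAS (hS ▸ subset_univ A)), if_neg hAS]

lemma nuOne_empty (hA : A.Nonempty) : nuOne A a ∅ = 0 :=
  nuOne_of_not_subset fun h => hA.ne_empty (subset_empty_iff.mp h)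

lemma nuOne_nonneg (ha₀ : 0 ≤ a) (S : Set X) : 0 ≤ nuOne A a S := by
  unfold nuOne; split_ifs <;> linarith

lemma nuOne_le_one (ha₁ : a ≤ 1) (S : Set X) : nuOne A a S ≤ 1 := by
  unfold nuOne; split_ifs <;> linarith

lemma le_nuOne (ha₁ : a ≤ 1) {S : Set X} (hAS : A ⊆ S) : a ≤ nuOne A a S := by
  unfold nuOne; split_ifs <;> linarith

lemma nuOne_le_of_ne_univ (ha₀ : 0 ≤ a) {S : Set X} (hS : S ≠ univ) : nuOne A a S ≤ a := by
  rw [nuOne, if_neg hS]; split_ifs <;> linarith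

lemma monotone_nuOne (ha : a ∈ Icc (0 : ℝ) 1) : Monotone (nuOne A a) := by
  intro F G hFG
  by_cases hG : G = univ
  · simpa [hG] using nuOne_le_one ha.2 F
  by_cases hAF : A ⊆ F
  · rw [nuOne_of_subset_of_ne_univ hAF fun hF => hG (eq_univ_of_univ_subset (hF ▸ hFG))]
    exact le_nuOne ha.2 (hAF.trans hFG)
  · rw [nuOne_of_not_subset hAF]
    exact nuOne_nonneg ha.1 G

lemma exists_isClosed_subset_nuOne_eq [TopologicalSpace X] (hAc : IsClosed A) (S : Set X) :
    ∃ K, IsClosed K ∧ K ⊆ S ∧ nuOne A a K = nuOne A a S := by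
  by_cases hS : S = univ
  · exact ⟨univ, isClosed_univ, hS ▸ subset_rfl, by rw [hS]⟩
  by_cases hAS : A ⊆ S
  · have hA : A ≠ univ := fun hA => hS (eq_univ_of_univ_subset (hA ▸ hAS))
    refine ⟨A, hAc, hAS, ?_⟩
    rw [nuOne_of_subset_of_ne_univ subset_rfl hA, nuOne_of_subset_of_ne_univ hAS hS]
  · refine ⟨∅, isClosed_empty, empty_subset S, ?_⟩
    rw [nuOne_of_not_subset (fun h => hAS (h.trans (empty_subset S))), nuOne_of_not_subset hAS]

lemma exists_notMem_forall_nuOne_le (ha₀ : 0 ≤ a) {F : Set X} (hF : F ≠ univ) :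
    ∃ x ∉ F, ∀ B : Set X, x ∉ B → nuOne A a B ≤ nuOne A a F := by
  by_cases hAF : A ⊆ F
  · obtain ⟨x, hxF⟩ := (ne_univ_iff_exists_notMem F).mp hF
    refine ⟨x, hxF, fun B hxB => ?_⟩
    rw [nuOne_of_subset_of_ne_univ hAF hF]
    exact nuOne_le_of_ne_univ ha₀ ((ne_univ_iff_exists_notMem B).mpr ⟨x, hxB⟩)
  · obtain ⟨x, hxA, hxF⟩ := not_subset.mp hAF
    refine ⟨x, hxF, fun B hxB => ?_⟩
    rw [nuOne_of_not_subset hAF, nuOne_of_not_subset fun h => hxB (h hxA)]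

lemma nuOne_usc [TopologicalSpace X] [T1Space X] (ha : a ∈ Icc (0 : ℝ) 1) {F : Set X} {b : ℝ}
    (hFb : nuOne A a F < b) :
    ∃ O : Set X, IsOpen O ∧ F ⊆ O ∧ ∀ ⦃B : Set X⦄, IsClosed B → B ⊆ O → nuOne A a B < b := by
  by_cases hF : F = univ
  · refine ⟨univ, isOpen_univ, subset_univ F, fun B _ _ => ?_⟩
    rw [hF, nuOne_univ] at hFb
    exact (nuOne_le_one ha.2 B).trans_lt hFb
  obtain ⟨x, hxF, hle⟩ := exists_notMem_forall_nuOne_le (A := A) ha.1 hF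
  exact ⟨{x}ᶜ, isOpen_compl_singleton, subset_compl_singleton_iff.mpr hxF,
    fun B _ hBO => (hle B (subset_compl_singleton_iff.mp hBO)).trans_lt hFb⟩

lemma nuOne_eq_sSup_isClosed_subset [TopologicalSpace X] (hAc : IsClosed A)
    (ha : a ∈ Icc (0 : ℝ) 1) (S : Set X) :
    nuOne A a S = sSup (nuOne A a '' {K | IsClosed K ∧ K ⊆ S}) := by
  obtain ⟨K, hK, hKS, hKeq⟩ := exists_isClosed_subset_nuOne_eq (a := a) hAc S
  have hgreatest : IsGreatest (nuOne A a '' {K | IsClosed K ∧ K ⊆ S}) (nuOne A a S) := by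
    refine ⟨⟨K, ⟨hK, hKS⟩, hKeq⟩, ?_⟩
    rintro _ ⟨L, ⟨-, hLS⟩, rfl⟩
    exact monotone_nuOne ha hLS
  exact hgreatest.csSup_eq.symm

noncomputable def nuOneCapacity [TopologicalSpace X] [T1Space X] (hAc : IsClosed A)
    (hAne : A.Nonempty) (ha : a ∈ Icc (0 : ℝ) 1) : Capacity X where
  toFun := nuOne A a
  nonneg := nuOne_nonneg ha.1
  le_one := nuOne_le_one ha.2
  empty := nuOne_empty hAne
  univ := nuOne_univ
  mono _ _ _ _ h := monotone_nuOne ha h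
  innerReg := nuOne_eq_sSup_isClosed_subset hAc ha
  usc _ _ _ := nuOne_usc ha

lemma nuOne_le_capacity_iff [TopologicalSpace X] (hAc : IsClosed A) (ha₁ : a ≤ 1)
    (α : Capacity X) :
    (∀ C : Set X, IsClosed C → nuOne A a C ≤ α.toFun C) ↔ a ≤ α.toFun A := by
  refine ⟨fun h => (le_nuOne ha₁ subset_rfl).trans (h A hAc), fun h C hC => ?_⟩
  unfold nuOne
  split_ifs with hCu hAC
  · rw [hCu, α.univ]
  · exact h.trans (α.mono hAc hC hAC)
  · exact α.nonneg C

end NuOne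

theorem nu_one_capacity_general {X : Type*} [TopologicalSpace X] [T2Space X]
    (A : Set X) (hAc : IsClosed A) (hAne : A.Nonempty)
    (a : ℝ) (ha : a ∈ Set.Icc (0 : ℝ) 1) :
    ∃ ν₁ : Capacity X,
      (∀ C : Set X, IsClosed C →
        ν₁.toFun C = if C = Set.univ then 1 else if A ⊆ C then a else 0) ∧
      ∀ α : Capacity X,
        ((∀ C : Set X, IsClosed C → ν₁.toFun C ≤ α.toFun C) ↔ a ≤ α.toFun A) :=
  ⟨nuOneCapacity hAc hAne ha, fun _ _ => rfl, nuOne_le_capacity_iff hAc ha.2⟩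

/-- For a nonempty proper closed `A ⊆ X` and `a ∈ [0,1]`, the set function `ν₁` with
`ν₁(C) = 0` if `A ⊄ C`, `ν₁(C) = a` if `A ⊆ C ≠ X`, `ν₁(X) = 1` is a capacity, and for
every capacity `α`, `ν₁ ≤ α` pointwise on closed sets iff `α(A) ≥ a`. -/
theorem nu_one_capacity {X : Type*} [TopologicalSpace X] [CompactSpace X] [T2Space X]
    (A : Set X) (hAc : IsClosed A) (hAne : A.Nonempty) (hAprop : A ≠ Set.univ)
    (a : ℝ) (ha : a ∈ Set.Icc (0 : ℝ) 1) :
    ∃ ν₁ : Capacity X,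
      (∀ C : Set X, IsClosed C →
        ν₁.toFun C = if C = Set.univ then 1 else if A ⊆ C then a else 0) ∧
      ∀ α : Capacity X,
        ((∀ C : Set X, IsClosed C → ν₁.toFun C ≤ α.toFun C) ↔ a ≤ α.toFun A) :=
  nu_one_capacity_general A hAc hAne a ha
end

section
/- Let X₁, X₂ be compact Hausdorff spaces, μ₁ a capacity on X₁ and μ₂ a capacity on X₂. Define the tensor product μ₁ ⊗ μ₂ on closed B ⊆ X₁ × X₂ by (μ₁⊗μ₂)(B) = sup{t ∈ [0,1] | μ₁({x ∈ X₁ | μ₂(p₂((({x} × X₂) ∩ B))) ≥ t}) ≥ t}, where p₂ is the projection to X₂. Suppose A₁ ⊆ X₁ and A₂ ⊆ X₂ are closed and μᵢ(K) = 0 for every compact K ⊆ Xᵢ \ Aᵢ (i = 1,2). Then (μ₁⊗μ₂)(B) = 0 for every compact B ⊆ (X₁ × X₂) \ (A₁ × A₂). -/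
namespace Capacity

variable {X : Type*} [TopologicalSpace X] [CompactSpace X]

theorem toFun_eq_zero_of_subset (μ : Capacity X) {U S : Set X}
    (hU : ∀ K : Set X, IsCompact K → K ⊆ U → μ.toFun K = 0) (hS : S ⊆ U) :
    μ.toFun S = 0 := by
  have himage : μ.toFun '' {K : Set X | IsClosed K ∧ K ⊆ S} = {0} := by
    refine Set.Subset.antisymm ?_ ?_
    · rintro _ ⟨K, ⟨hKc, hKS⟩, rfl⟩
      exact hU K hKc.isCompact (hKS.trans hS)
    · rintro _ rfl
      exact ⟨∅, ⟨isClosed_empty, Set.empty_subset S⟩, μ.empty⟩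
  rw [μ.innerReg S, himage, csSup_singleton]

end Capacity

theorem snd_image_section_subset_compl {X₁ X₂ : Type*} {A₁ : Set X₁} {A₂ : Set X₂}
    {B : Set (X₁ × X₂)} (hB : B ⊆ (A₁ ×ˢ A₂)ᶜ) {x : X₁} (hx : x ∈ A₁) :
    Prod.snd '' (({x} ×ˢ (Set.univ : Set X₂)) ∩ B) ⊆ A₂ᶜ := by
  rintro _ ⟨⟨x', y⟩, ⟨⟨rfl, -⟩, hxy⟩, rfl⟩ hy
  exact hB hxy ⟨hx, hy⟩

theorem tensor_vanishes_off_product_general {X₁ X₂ : Type*}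
    [TopologicalSpace X₁] [TopologicalSpace X₂]
    [CompactSpace X₁] [CompactSpace X₂]
    (μ₁ : Capacity X₁) (μ₂ : Capacity X₂)
    (A₁ : Set X₁) (A₂ : Set X₂)
    (h₁ : ∀ K : Set X₁, IsCompact K → K ⊆ A₁ᶜ → μ₁.toFun K = 0)
    (h₂ : ∀ K : Set X₂, IsCompact K → K ⊆ A₂ᶜ → μ₂.toFun K = 0)
    (B : Set (X₁ × X₂)) (hBsub : B ⊆ (A₁ ×ˢ A₂)ᶜ) :
    sSup {t : ℝ | t ∈ Set.Icc (0 : ℝ) 1 ∧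
      t ≤ μ₁.toFun {x : X₁ |
        t ≤ μ₂.toFun (Prod.snd '' (({x} ×ˢ (Set.univ : Set X₂)) ∩ B))}} = 0 := by
  refine le_antisymm (Real.sSup_le ?_ le_rfl) (Real.sSup_nonneg fun t ht => ht.1.1)
  rintro t ⟨-, ht⟩
  by_contra! htpos
  -- Sections over points of `A₁` are `μ₂`-null, so the `t`-superlevel set avoids `A₁`.
  have hlevel : {x : X₁ | t ≤ μ₂.toFun (Prod.snd '' (({x} ×ˢ (Set.univ : Set X₂)) ∩ B))}
      ⊆ A₁ᶜ := by
    intro x hx hxA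
    have hnull := μ₂.toFun_eq_zero_of_subset h₂ (snd_image_section_subset_compl hBsub hxA)
    exact htpos.not_ge (hnull ▸ hx)
  have hlevel_null := μ₁.toFun_eq_zero_of_subset h₁ hlevel
  linarith

/-- Lemma on the tensor product of capacities: if `μᵢ` vanishes on all compact subsets of
`Xᵢ \ Aᵢ` (with `Aᵢ` closed), then the tensor product `μ₁ ⊗ μ₂`, given by
`(μ₁⊗μ₂)(B) = sup{t ∈ [0,1] | μ₁({x | μ₂(p₂(({x}×X₂) ∩ B)) ≥ t}) ≥ t}`,
vanishes on every compact `B ⊆ (X₁ × X₂) \ (A₁ × A₂)`. -/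
theorem tensor_vanishes_off_product {X₁ X₂ : Type*}
    [TopologicalSpace X₁] [TopologicalSpace X₂]
    [CompactSpace X₁] [CompactSpace X₂] [T2Space X₁] [T2Space X₂]
    (μ₁ : Capacity X₁) (μ₂ : Capacity X₂)
    (A₁ : Set X₁) (A₂ : Set X₂) (hA₁ : IsClosed A₁) (hA₂ : IsClosed A₂)
    (h₁ : ∀ K : Set X₁, IsCompact K → K ⊆ A₁ᶜ → μ₁.toFun K = 0)
    (h₂ : ∀ K : Set X₂, IsCompact K → K ⊆ A₂ᶜ → μ₂.toFun K = 0)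
    (B : Set (X₁ × X₂)) (hB : IsCompact B) (hBsub : B ⊆ (A₁ ×ˢ A₂)ᶜ) :
    sSup {t : ℝ | t ∈ Set.Icc (0 : ℝ) 1 ∧
      t ≤ μ₁.toFun {x : X₁ |
        t ≤ μ₂.toFun (Prod.snd '' (({x} ×ˢ (Set.univ : Set X₂)) ∩ B))}} = 0 :=
  tensor_vanishes_off_product_general μ₁ μ₂ A₁ A₂ h₁ h₂ B hBsub
end

section
/- Let X be a compact Hausdorff space, μ a capacity on X, ψ : [0,1] → [−∞,+∞] an increasing homeomorphism of [0,1] onto the extended reals (ψ(0) = −∞, ψ(1) = +∞), and f : X → ℝ continuous. Then the set {t ∈ ℝ | μ(f⁻¹([t,∞))) ≥ ψ⁻¹(t)} is nonempty and has a maximum; this maximum defines the (modified) Sugeno integral ∫^{Sug}_X f dμ. -/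
open Set

theorem exists_lt_preimage_Ici_subset {X : Type*} [TopologicalSpace X] [CompactSpace X]
    {f : X → ℝ} (hf : Continuous f) {O : Set X} (hO : IsOpen O) {t : ℝ}
    (htO : f ⁻¹' Ici t ⊆ O) : ∃ s < t, f ⁻¹' Ici s ⊆ O := by
  rcases (Oᶜ).eq_empty_or_nonempty with hempty | hne
  · exact ⟨t - 1, by linarith, by simp [compl_empty_iff.1 hempty]⟩
  obtain ⟨x, hxO, hxmax⟩ := hO.isClosed_compl.isCompact.exists_isMaxOn hne hf.continuousOn
  have hxt : f x < t := not_le.1 fun h => hxO (htO h)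
  obtain ⟨s, hxs, hst⟩ := exists_between hxt
  refine ⟨s, hst, fun y hys => by_contra fun hyO => ?_⟩
  have hyx : f y ≤ f x := hxmax hyO
  have hsy : s ≤ f y := hys
  linarith

theorem Capacity.upperSemicontinuous_preimage_Ici {X : Type*} [TopologicalSpace X]
    [CompactSpace X] (μ : Capacity X) {f : X → ℝ} (hf : Continuous f) :
    UpperSemicontinuous fun t => μ.toFun (f ⁻¹' Ici t) := by
  intro t a hta
  obtain ⟨O, hO, htO, hsmall⟩ := μ.usc (isClosed_Ici.preimage hf) hta
  obtain ⟨s, hst, hsO⟩ := exists_lt_preimage_Ici_subset hf hO htO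
  filter_upwards [Ioi_mem_nhds hst] with u hsu
  exact hsmall (isClosed_Ici.preimage hf)
    ((preimage_mono (Ici_subset_Ici.2 (le_of_lt hsu))).trans hsO)

theorem UpperSemicontinuous.isClosed_setOf_le {α : Type*} [TopologicalSpace α] {g φ : α → ℝ}
    (hg : UpperSemicontinuous g) (hφ : Continuous φ) : IsClosed {x | φ x ≤ g x} := by
  have := (hg.add hφ.neg.upperSemicontinuous).isClosed_preimage 0
  simpa only [preimage, mem_Ici, Pi.neg_apply, ← sub_eq_add_neg, sub_nonneg] using this

theorem sugeno_integral_exists_general {X : Type*} [TopologicalSpace X] [CompactSpace X]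
    (μ : Capacity X)
    (φ : ℝ → ℝ) (hφcont : Continuous φ)
    (hφrange : Set.range φ = Set.Ioo (0 : ℝ) 1)
    (f : X → ℝ) (hf : Continuous f) :
    ∃ t₀ : ℝ, IsGreatest {t : ℝ | φ t ≤ μ.toFun (f ⁻¹' Set.Ici t)} t₀ := by
  have hφ : ∀ t, φ t ∈ Ioo (0 : ℝ) 1 := fun t => hφrange ▸ mem_range_self t
  obtain ⟨b, hb⟩ := (isCompact_range hf).bddBelow
  obtain ⟨B, hB⟩ := (isCompact_range hf).bddAbove
  have hclosed := (μ.upperSemicontinuous_preimage_Ici hf).isClosed_setOf_le hφcont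
  have hb_mem : b ∈ {t : ℝ | φ t ≤ μ.toFun (f ⁻¹' Ici t)} := by
    have huniv : f ⁻¹' Ici b = univ := eq_univ_of_forall fun x => hb (mem_range_self x)
    simp only [mem_ofPred_eq, huniv, μ.univ, (hφ b).2.le]
  have hbdd : BddAbove {t : ℝ | φ t ≤ μ.toFun (f ⁻¹' Ici t)} := by
    refine ⟨B, fun t ht => not_lt.1 fun hBt => ?_⟩
    have hempty : f ⁻¹' Ici t = ∅ :=
      eq_empty_of_forall_notMem fun x hx => (hB (mem_range_self x)).not_gt (hBt.trans_le hx)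
    simp only [mem_ofPred_eq, hempty, μ.empty] at ht
    exact (hφ t).1.not_ge ht
  exact ⟨_, hclosed.isGreatest_csSup ⟨b, hb_mem⟩ hbdd⟩

/-- The (modified) Sugeno integral is well defined: for a capacity `μ` on a nonempty
compactum `X`, a correction homeomorphism `ψ` (represented by its inverse
`φ = ψ⁻¹ : ℝ → (0,1)`, an increasing continuous bijection onto `Ioo 0 1`), and a
continuous `f : X → ℝ`, the set `{t | μ(f⁻¹([t,∞))) ≥ ψ⁻¹(t)}` is nonempty and has a
maximum. -/
theorem sugeno_integral_exists {X : Type*} [TopologicalSpace X] [CompactSpace X]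
    [T2Space X] [Nonempty X] (μ : Capacity X)
    (φ : ℝ → ℝ) (hφmono : StrictMono φ) (hφcont : Continuous φ)
    (hφrange : Set.range φ = Set.Ioo (0 : ℝ) 1)
    (f : X → ℝ) (hf : Continuous f) :
    ∃ t₀ : ℝ, IsGreatest {t : ℝ | φ t ≤ μ.toFun (f ⁻¹' Set.Ici t)} t₀ :=
  sugeno_integral_exists_general μ φ hφcont hφrange f hf
end

section
/- Let X, Y be nonempty compact Hausdorff spaces, M(Y) the space of capacities on Y with the topology generated by the sets O₋(F,a) = {ν | ν(F) < a} (F closed) and O₊(U,a) = {ν | ν(U) > a} (U open, with ν(U) = sup{ν(K) | K ⊆ U closed}). Let p : X × Y → ℝ be continuous, ψ the increasing homeomorphism of (0,1) onto ℝ extended by ψ(0)=−∞, ψ(1)=+∞, and define P : X × M(Y) → ℝ by P(x,ν) = max{t ∈ ℝ | ν({y | p(x,y) ≥ t}) ≥ ψ⁻¹(t)} (the Sugeno integral of p(x,·) against ν). Then P is continuous. -/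
/-- The standard topology on the space of capacities, generated by the subbase
`O₋(F,a) = {ν | ν(F) < a}` for `F` closed and `O₊(U,a) = {ν | ν(U) > a}` for `U` open. -/
def capTop (Y : Type*) [TopologicalSpace Y] : TopologicalSpace (Capacity Y) :=
  TopologicalSpace.generateFrom
    ({S | ∃ (F : Set Y) (a : ℝ), IsClosed F ∧ S = {ν : Capacity Y | ν.toFun F < a}} ∪
     {S | ∃ (U : Set Y) (a : ℝ), IsOpen U ∧ S = {ν : Capacity Y | a < ν.toFun U}})

/-! If `t < P(x₀, ν₀)`, then `ν₀{y | t < p(x₀, y)} > φ t`, an open condition on `ν`. Since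
`p(x, ·) → p(x₀, ·)` uniformly on the compact `Y`, a closed subset of `{t < p(x₀, ·)}` of
capacity above `φ t` lies in `{t - δ ≤ p(x, ·)}` for `x` near `x₀`, whence `P(x, ν) ≥ t - δ`.
Dually, if `P(x₀, ν₀) < t`, then `ν₀{y | t ≤ p(x₀, y)} < φ t`, again an open condition, and for
`x` near `x₀` the set `{t + δ ≤ p(x, ·)}` lies in `{t ≤ p(x₀, ·)}`, whence `P(x, ν) < t + δ`. -/

attribute [local instance] capTop

open Filter Topology

namespace Capacity

variable {Y : Type*} [TopologicalSpace Y]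

theorem le_of_isClosed_subset (ν : Capacity Y) {K S : Set Y} (hK : IsClosed K) (hKS : K ⊆ S) :
    ν.toFun K ≤ ν.toFun S := by
  rw [ν.innerReg S]
  refine le_csSup ⟨1, ?_⟩ ⟨K, ⟨hK, hKS⟩, rfl⟩
  rintro r ⟨L, -, rfl⟩
  exact ν.le_one L

theorem exists_isClosed_subset_lt_toFun (ν : Capacity Y) {S : Set Y} {a : ℝ}
    (h : a < ν.toFun S) : ∃ K, IsClosed K ∧ K ⊆ S ∧ a < ν.toFun K := by
  rw [ν.innerReg S] at h
  obtain ⟨_, ⟨K, ⟨hK, hKS⟩, rfl⟩, hlt⟩ :=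
    exists_lt_of_lt_csSup
      (Set.Nonempty.image _ (⟨∅, isClosed_empty, Set.empty_subset S⟩ :
        {K : Set Y | IsClosed K ∧ K ⊆ S}.Nonempty)) h
  exact ⟨K, hK, hKS, hlt⟩

theorem eventually_toFun_lt {ν : Capacity Y} {F : Set Y} {a : ℝ} (hF : IsClosed F)
    (h : ν.toFun F < a) : ∀ᶠ μ in 𝓝 ν, μ.toFun F < a :=
  (TopologicalSpace.isOpen_generateFrom_of_mem (Or.inl ⟨F, a, hF, rfl⟩)).eventually_mem h

theorem eventually_lt_toFun {ν : Capacity Y} {U : Set Y} {a : ℝ} (hU : IsOpen U)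
    (h : a < ν.toFun U) : ∀ᶠ μ in 𝓝 ν, a < μ.toFun U :=
  (TopologicalSpace.isOpen_generateFrom_of_mem (Or.inr ⟨U, a, hU, rfl⟩)).eventually_mem h

/-- `s` is the Sugeno integral of `f` against `ν`, with `φ` in the role of `ψ⁻¹`. -/
def IsSugenoIntegral (ν : Capacity Y) (φ : ℝ → ℝ) (f : Y → ℝ) (s : ℝ) : Prop :=
  IsGreatest {t | φ t ≤ ν.toFun {y | t ≤ f y}} s

namespace IsSugenoIntegral

variable {ν : Capacity Y} {φ : ℝ → ℝ} {f g : Y → ℝ} {s t δ : ℝ}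

theorem le_toFun_of_le (hs : ν.IsSugenoIntegral φ f s) (hφ : Monotone φ) (hf : Continuous f)
    (hts : t ≤ s) : φ t ≤ ν.toFun {y | t ≤ f y} :=
  calc φ t ≤ φ s := hφ hts
    _ ≤ ν.toFun {y | s ≤ f y} := hs.1
    _ ≤ ν.toFun {y | t ≤ f y} :=
      ν.mono (isClosed_le continuous_const hf) (isClosed_le continuous_const hf)
        fun _ hy => hts.trans hy

theorem toFun_lt_of_lt (hs : ν.IsSugenoIntegral φ f s) (hst : s < t) :
    ν.toFun {y | t ≤ f y} < φ t :=
  lt_of_not_ge fun h => (hs.2 h).not_gt hst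

theorem lt_toFun_of_lt (hs : ν.IsSugenoIntegral φ f s) (hφ : StrictMono φ) (hf : Continuous f)
    (hts : t < s) : φ t < ν.toFun {y | t < f y} :=
  calc φ t < φ s := hφ hts
    _ ≤ ν.toFun {y | s ≤ f y} := hs.1
    _ ≤ ν.toFun {y | t < f y} :=
      ν.le_of_isClosed_subset (isClosed_le continuous_const hf) fun _ hy => hts.trans_le hy

/-- The capacity of the open set `{t < g}` is approached by closed subsets, and these lie in
`{t - δ ≤ f}`. -/
theorem sub_le (hs : ν.IsSugenoIntegral φ f s) (hφ : Monotone φ) (hf : Continuous f)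
    (hδ : 0 ≤ δ) (ht : φ t < ν.toFun {y | t < g y}) (hgf : ∀ y, g y - δ ≤ f y) : t - δ ≤ s := by
  obtain ⟨K, hK, hKg, hφK⟩ := ν.exists_isClosed_subset_lt_toFun ht
  have hKf : K ⊆ {y | t - δ ≤ f y} := fun y hy =>
    show t - δ ≤ f y by linarith [hgf y, show t < g y from hKg hy]
  refine hs.2 ?_
  calc φ (t - δ) ≤ φ t := hφ (by linarith)
    _ ≤ ν.toFun K := hφK.le
    _ ≤ ν.toFun {y | t - δ ≤ f y} := ν.mono hK (isClosed_le continuous_const hf) hKf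

theorem lt_add (hs : ν.IsSugenoIntegral φ f s) (hφ : Monotone φ) (hf : Continuous f)
    (hg : Continuous g) (hδ : 0 ≤ δ) (ht : ν.toFun {y | t ≤ g y} < φ t)
    (hfg : ∀ y, f y ≤ g y + δ) : s < t + δ := by
  by_contra! hts
  have hsub : {y | t + δ ≤ f y} ⊆ {y | t ≤ g y} := fun y hy =>
    show t ≤ g y by linarith [hfg y, show t + δ ≤ f y from hy]
  have := calc φ t ≤ φ (t + δ) := hφ (by linarith)
    _ ≤ ν.toFun {y | t + δ ≤ f y} := hs.le_toFun_of_le hφ hf hts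
    _ ≤ ν.toFun {y | t ≤ g y} :=
      ν.mono (isClosed_le continuous_const hf) (isClosed_le continuous_const hg) hsub
  exact this.not_gt ht

end IsSugenoIntegral

theorem tendsto_of_isSugenoIntegral [CompactSpace Y] {α : Type*} {l : Filter α}
    {φ : ℝ → ℝ} (hφ : StrictMono φ) {F : α → C(Y, ℝ)} {f : C(Y, ℝ)} (hF : Tendsto F l (𝓝 f))
    {μ : α → Capacity Y} {ν : Capacity Y} (hμ : Tendsto μ l (𝓝 ν)) {S : α → ℝ} {s : ℝ}
    (hS : ∀ a, (μ a).IsSugenoIntegral φ (F a) (S a)) (hs : ν.IsSugenoIntegral φ f s) :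
    Tendsto S l (𝓝 s) := by
  have hclose : ∀ δ > 0, ∀ᶠ a in l, ∀ y, |F a y - f y| < δ := fun δ hδ =>
    (Metric.tendstoUniformly_iff.1 (ContinuousMap.tendsto_iff_tendstoUniformly.1 hF) δ hδ).mono
      fun a ha y => by simpa [Real.dist_eq, abs_sub_comm] using ha y
  rw [tendsto_order]
  constructor
  · intro b hb
    have hφt : φ ((b + s) / 2) < ν.toFun {y | (b + s) / 2 < f y} :=
      hs.lt_toFun_of_lt hφ f.continuous (by linarith)
    filter_upwards [hμ.eventually (eventually_lt_toFun (isOpen_lt continuous_const f.continuous)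
      hφt), hclose ((s - b) / 4) (by linarith)] with a hμa hFa
    have := (hS a).sub_le (δ := (s - b) / 4) hφ.monotone (F a).continuous (by linarith) hμa
      fun y => by linarith [(abs_lt.1 (hFa y)).1]
    linarith
  · intro b hb
    have hφt : ν.toFun {y | (s + b) / 2 ≤ f y} < φ ((s + b) / 2) :=
      hs.toFun_lt_of_lt (by linarith)
    filter_upwards [hμ.eventually (eventually_toFun_lt (isClosed_le continuous_const f.continuous)
      hφt), hclose ((b - s) / 4) (by linarith)] with a hμa hFa
    have := (hS a).lt_add (δ := (b - s) / 4) hφ.monotone (F a).continuous f.continuous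
      (by linarith) hμa fun y => by linarith [(abs_lt.1 (hFa y)).2]
    linarith

end Capacity

theorem sugeno_payoff_continuous_general {X Y : Type*} [TopologicalSpace X] [TopologicalSpace Y]
    [CompactSpace Y]
    (p : X × Y → ℝ) (hp : Continuous p)
    (φ : ℝ → ℝ) (hφmono : StrictMono φ)
    (P : X × Capacity Y → ℝ)
    (hP : ∀ (x : X) (ν : Capacity Y),
      IsGreatest {t : ℝ | φ t ≤ ν.toFun {y : Y | t ≤ p (x, y)}} (P (x, ν))) :
    @Continuous (X × Capacity Y) ℝ
      (@instTopologicalSpaceProd X (Capacity Y) _ (capTop Y)) _ P := by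
  have hsection : Continuous fun z : X × Capacity Y => ContinuousMap.curry ⟨p, hp⟩ z.1 :=
    (ContinuousMap.curry ⟨p, hp⟩).continuous.comp continuous_fst
  exact continuous_iff_continuousAt.2 fun z =>
    Capacity.tendsto_of_isSugenoIntegral hφmono hsection.continuousAt continuous_snd.continuousAt
      (fun z => hP z.1 z.2) (hP z.1 z.2)

/-- Continuity of the Sugeno expected payoff: for continuous `p : X × Y → ℝ` on nonempty
compacta, the function `P(x,ν) = max{t | ν({y | p(x,y) ≥ t}) ≥ ψ⁻¹(t)}` (the Sugeno
integral of `p(x,·)` against `ν`, with `φ = ψ⁻¹` the increasing bijection of `ℝ` onto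
`(0,1)`) is continuous on `X × M(Y)`, where `M(Y)` carries the capacity topology. -/
theorem sugeno_payoff_continuous {X Y : Type*} [TopologicalSpace X] [TopologicalSpace Y]
    [CompactSpace X] [CompactSpace Y] [T2Space X] [T2Space Y] [Nonempty X] [Nonempty Y]
    (p : X × Y → ℝ) (hp : Continuous p)
    (φ : ℝ → ℝ) (hφmono : StrictMono φ) (hφcont : Continuous φ)
    (hφrange : Set.range φ = Set.Ioo (0 : ℝ) 1)
    (P : X × Capacity Y → ℝ)
    (hP : ∀ (x : X) (ν : Capacity Y),
      IsGreatest {t : ℝ | φ t ≤ ν.toFun {y : Y | t ≤ p (x, y)}} (P (x, ν))) :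
    @Continuous (X × Capacity Y) ℝ
      (@instTopologicalSpaceProd X (Capacity Y) _ (capTop Y)) _ P :=
  sugeno_payoff_continuous_general p hp φ hφmono P hP
end

section
/- Let X, Y be nonempty compact Hausdorff spaces, p : X × Y → ℝ continuous, ν a capacity on Y, and t = P(x₀, ν) the Sugeno integral of p(x₀, ·) against ν (with correction homeomorphism ψ). For every ε > 0 there exist an open neighborhood O of x₀ in X and an open neighborhood V of ν in M(Y) such that for all (z, α) ∈ O × V, |P(z, α) − t| < ε, where V may be taken of the form {α | α(A^{x₀}_{≥ t+ε/4}) < ψ⁻¹(t+ε/4)} ∩ {α | α(A^{x₀}_{≥ t−ε/4}) > ψ⁻¹(t−ε/2)} with A^x_{≥s} = {y | p(x,y) ≥ s}. -/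
/-!
Since `Y` is compact, near `x₀` the sections `p(z, ·)` are uniformly `ε/4`-close to `p(x₀, ·)`,
so the superlevel sets of `p(z, ·)` are squeezed between superlevel sets of `p(x₀, ·)` at levels
shifted by `ε/4`. The two conditions defining `V` bound the capacities of exactly those sets,
which pins `P(z, α)` to `(t - ε/2, t + ε/2)`; they hold at `ν` because `t` is the largest level
`s` with `φ s ≤ ν {p(x₀, ·) ≥ s}`.
-/

namespace Capacity

variable {Y : Type*} [TopologicalSpace Y] (α : Capacity Y) {g h : Y → ℝ} {r s δ P : ℝ}

/-- The levels admitted by the Sugeno integral of `g` with correction `φ`; the integral is the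
greatest of them. -/
def sugenoSet (φ : ℝ → ℝ) (g : Y → ℝ) : Set ℝ :=
  {s | φ s ≤ α.toFun {y | s ≤ g y}}

theorem toFun_superlevel_mono (hg : Continuous g) (hh : Continuous h)
    (hgh : ∀ y, r ≤ g y → s ≤ h y) : α.toFun {y | r ≤ g y} ≤ α.toFun {y | s ≤ h y} :=
  α.mono (isClosed_le continuous_const hg) (isClosed_le continuous_const hh) hgh

variable {α} {φ : ℝ → ℝ}

theorem toFun_superlevel_lt_of_sugeno_lt (hP : IsGreatest (α.sugenoSet φ g) P) (hr : P < r) :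
    α.toFun {y | r ≤ g y} < φ r :=
  lt_of_not_ge fun hle => hr.not_ge (hP.2 hle)

theorem lt_toFun_superlevel_of_lt_sugeno (hφ : StrictMono φ) (hg : Continuous g)
    (hP : IsGreatest (α.sugenoSet φ g) P) (hr : r < P) (hs : s ≤ P) :
    φ r < α.toFun {y | s ≤ g y} :=
  calc φ r < φ P := hφ hr
    _ ≤ α.toFun {y | P ≤ g y} := hP.1
    _ ≤ α.toFun {y | s ≤ g y} := α.toFun_superlevel_mono hg hg fun _ hy => hs.trans hy

theorem le_sugeno_of_superlevel (hg : Continuous g) (hh : Continuous h)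
    (hP : IsGreatest (α.sugenoSet φ g) P) (hhg : ∀ y, h y ≤ g y + δ) (hsr : s + δ ≤ r)
    (hr : φ s ≤ α.toFun {y | r ≤ h y}) : s ≤ P :=
  hP.2 <| hr.trans <| α.toFun_superlevel_mono hh hg fun y hy => by linarith [hhg y]

theorem sugeno_lt_of_superlevel (hφ : Monotone φ) (hδ : 0 ≤ δ) (hg : Continuous g)
    (hh : Continuous h) (hP : IsGreatest (α.sugenoSet φ g) P) (hgh : ∀ y, g y ≤ h y + δ)
    (hrs : r + δ ≤ s) (hr : α.toFun {y | r ≤ h y} < φ r) : P < s := by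
  by_contra! hsP
  have : α.toFun {y | P ≤ g y} ≤ α.toFun {y | r ≤ h y} :=
    α.toFun_superlevel_mono hg hh fun y hy => by linarith [hgh y]
  linarith [hφ (show r ≤ P by linarith), show φ P ≤ _ from hP.1]

end Capacity

theorem exists_isOpen_forall_dist_section_lt {X Y Z : Type*} [TopologicalSpace X]
    [TopologicalSpace Y] [CompactSpace Y] [PseudoMetricSpace Z] {f : X × Y → Z}
    (hf : Continuous f) (x₀ : X) {ε : ℝ} (hε : 0 < ε) :
    ∃ O : Set X, IsOpen O ∧ x₀ ∈ O ∧ ∀ z ∈ O, ∀ y, dist (f (z, y)) (f (x₀, y)) < ε := by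
  let F : C(X, C(Y, Z)) := ContinuousMap.curry ⟨f, hf⟩
  exact ⟨F ⁻¹' Metric.ball (F x₀) ε, Metric.isOpen_ball.preimage F.continuous,
    Metric.mem_ball_self hε, fun z hz y => (ContinuousMap.dist_apply_le_dist y).trans_lt hz⟩

theorem sugeno_payoff_local_estimate_general {X Y : Type*} [TopologicalSpace X] [TopologicalSpace Y]
    [CompactSpace Y]
    (p : X × Y → ℝ) (hp : Continuous p)
    (φ : ℝ → ℝ) (hφmono : StrictMono φ)
    (P : X × Capacity Y → ℝ)
    (hP : ∀ (x : X) (α : Capacity Y),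
      IsGreatest {s : ℝ | φ s ≤ α.toFun {y : Y | s ≤ p (x, y)}} (P (x, α)))
    (x₀ : X) (ν : Capacity Y) (t : ℝ) (ht : t = P (x₀, ν)) (ε : ℝ) (hε : 0 < ε) :
    ∃ O : Set X, IsOpen O ∧ x₀ ∈ O ∧
      ν ∈ ({α : Capacity Y | α.toFun {y : Y | t + ε/4 ≤ p (x₀, y)} < φ (t + ε/4)} ∩
           {α : Capacity Y | φ (t - ε/2) < α.toFun {y : Y | t - ε/4 ≤ p (x₀, y)}}) ∧
      ∀ z ∈ O,
        ∀ α ∈ ({α : Capacity Y | α.toFun {y : Y | t + ε/4 ≤ p (x₀, y)} < φ (t + ε/4)} ∩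
               {α : Capacity Y | φ (t - ε/2) < α.toFun {y : Y | t - ε/4 ≤ p (x₀, y)}}),
          |P (z, α) - t| < ε := by
  have hsec : ∀ x, Continuous fun y => p (x, y) := fun x => hp.comp (.prodMk_right x)
  have hν : IsGreatest (ν.sugenoSet φ fun y => p (x₀, y)) t := ht ▸ hP x₀ ν
  obtain ⟨O, hO, hx₀O, hclose⟩ :=
    exists_isOpen_forall_dist_section_lt hp x₀ (by positivity : 0 < ε / 4)
  refine ⟨O, hO, hx₀O, ⟨?_, ?_⟩, fun z hz α ⟨hα_upper, hα_lower⟩ => ?_⟩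
  · exact Capacity.toFun_superlevel_lt_of_sugeno_lt hν (by linarith)
  · exact Capacity.lt_toFun_superlevel_of_lt_sugeno hφmono (hsec x₀) hν (by linarith)
      (by linarith)
  have hdist : ∀ y, |p (z, y) - p (x₀, y)| < ε / 4 := hclose z hz
  have hlower : t - ε / 2 ≤ P (z, α) :=
    Capacity.le_sugeno_of_superlevel (δ := ε / 4) (hsec z) (hsec x₀) (hP z α)
      (fun y => by linarith [(abs_lt.mp (hdist y)).1]) (by linarith) hα_lower.le
  have hupper : P (z, α) < t + ε / 2 :=
    Capacity.sugeno_lt_of_superlevel (δ := ε / 4) hφmono.monotone (by positivity) (hsec z)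
      (hsec x₀) (hP z α) (fun y => by linarith [(abs_lt.mp (hdist y)).2]) (by linarith)
      hα_upper
  exact abs_lt.mpr ⟨by linarith, by linarith⟩

/-- Local continuity estimate for the Sugeno payoff: with `t = P(x₀, ν)` and `ε > 0`,
there is an open neighborhood `O` of `x₀` such that for the explicit set
`V = {α | α(A^{x₀}_{≥ t+ε/4}) < ψ⁻¹(t+ε/4)} ∩ {α | α(A^{x₀}_{≥ t−ε/4}) > ψ⁻¹(t−ε/2)}`
(which contains `ν`), all `(z, α) ∈ O × V` satisfy `|P(z,α) − t| < ε`. -/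
theorem sugeno_payoff_local_estimate {X Y : Type*} [TopologicalSpace X] [TopologicalSpace Y]
    [CompactSpace X] [CompactSpace Y] [T2Space X] [T2Space Y] [Nonempty X] [Nonempty Y]
    (p : X × Y → ℝ) (hp : Continuous p)
    (φ : ℝ → ℝ) (hφmono : StrictMono φ) (hφcont : Continuous φ)
    (hφrange : Set.range φ = Set.Ioo (0 : ℝ) 1)
    (P : X × Capacity Y → ℝ)
    (hP : ∀ (x : X) (α : Capacity Y),
      IsGreatest {s : ℝ | φ s ≤ α.toFun {y : Y | s ≤ p (x, y)}} (P (x, α)))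
    (x₀ : X) (ν : Capacity Y) (t : ℝ) (ht : t = P (x₀, ν)) (ε : ℝ) (hε : 0 < ε) :
    ∃ O : Set X, IsOpen O ∧ x₀ ∈ O ∧
      ν ∈ ({α : Capacity Y | α.toFun {y : Y | t + ε/4 ≤ p (x₀, y)} < φ (t + ε/4)} ∩
           {α : Capacity Y | φ (t - ε/2) < α.toFun {y : Y | t - ε/4 ≤ p (x₀, y)}}) ∧
      ∀ z ∈ O,
        ∀ α ∈ ({α : Capacity Y | α.toFun {y : Y | t + ε/4 ≤ p (x₀, y)} < φ (t + ε/4)} ∩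
               {α : Capacity Y | φ (t - ε/2) < α.toFun {y : Y | t - ε/4 ≤ p (x₀, y)}}),
          |P (z, α) - t| < ε :=
  sugeno_payoff_local_estimate_general p hp φ hφmono P hP x₀ ν t ht ε hε
end
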